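/- Let a_1, …, a_n be positive integers with Σ_{1≤i≤n} a_i = 2B and a_i ≤ B for all i, and set k = (B+1)(B+2). Let G be the vertex-weighted graph with vertex set {r} ∪ {u_i, v_i : 1 ≤ i ≤ n} ∪ {w, x}, edge set {{r,u_i}, {u_i,v_i} : 1 ≤ i ≤ n} ∪ {{r,w}, {w,x}}, and weights w(r) = B+1, w(u_i) = a_i, w(v_i) = a_i·B for each i, w(w) = 1, and w(x) = (B+1)². Then wvi(G) ≤ k if and only if there exists I ⊆ {1,…,n} with Σ_{i∈I} a_i = B. -/

import Mathlib

/-!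
Write `Q = (B+1)²`, so that `k = Q + (B+1)`. If `w(S) + max_C w(C) ≤ k`, then `x ∉ S`:
otherwise the remaining budget `B+1` cannot pay for `r` together with a component. So the
component of `x` weighs at least `Q`, which leaves `w(S) ≤ B+1` and forces `w ∈ S`, `r ∉ S`.
Put `I = {i | u_i ∈ S}`. The vertices `x`, `w` and `u_i` (`i ∈ I`) give `Σ_I a_i ≤ B`; on the
other hand `S` together with the component of `r` contains `r`, `w`, every `u_i` and every `v_i`
with `i ∉ I`, so `B + 2 + 2B + B·Σ_{i∉I} a_i ≤ k`, i.e. `Σ_{i∉I} a_i ≤ B`. The two sums add up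
to `2B`, hence both equal `B`. Conversely, for a solution `I` the set `{w} ∪ {u_i | i ∈ I}`
weighs `B+1` and leaves the components `{x}`, `{v_i}` (`i ∈ I`) and the rest, each of weight at
most `Q`.
-/

namespace VI

open SimpleGraph

variable {V : Type*}

/-- Total weight of a set of vertices. -/
noncomputable def setWeight (w : V → ℕ) (X : Set V) : ℕ := ∑ᶠ v ∈ X, w v

/-- Maximum weight of a connected component of `G − S`. -/
noncomputable def compMax (G : SimpleGraph V) (w : V → ℕ) (S : Set V) : ℕ :=
  sSup {n | ∃ C : (G.induce Sᶜ).ConnectedComponent, n = setWeight w (Subtype.val '' C.supp)}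

/-- `w(S) + max_{C ∈ cc(G−S)} w(V(C))`. -/
noncomputable def viCost (G : SimpleGraph V) (w : V → ℕ) (S : Set V) : ℕ :=
  setWeight w S + compMax G w S

/-- The weighted vertex integrity of `G`. -/
noncomputable def wvi (G : SimpleGraph V) (w : V → ℕ) : ℕ := ⨅ S : Set V, viCost G w S

/-- Maximum number of vertices of a connected component of `G − S`. -/
noncomputable def uCompMax (G : SimpleGraph V) (S : Set V) : ℕ :=
  sSup {n | ∃ C : (G.induce Sᶜ).ConnectedComponent, n = C.supp.ncard}

/-- `|S| + max_{C ∈ cc(G−S)} |V(C)|`. -/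
noncomputable def uViCost (G : SimpleGraph V) (S : Set V) : ℕ := S.ncard + uCompMax G S

/-- The (unweighted) vertex integrity of `G`. -/
noncomputable def uvi (G : SimpleGraph V) : ℕ := ⨅ S : Set V, uViCost G S

/-- A vertex `v` is redundant w.r.t. `S` if at most one connected component of `G − S`
contains a neighbor of `v`. -/
def Redundant (G : SimpleGraph V) (S : Set V) (v : V) : Prop :=
  {C : (G.induce Sᶜ).ConnectedComponent | ∃ u : (Sᶜ : Set V), G.Adj v ↑u ∧ u ∈ C.supp}.Subsingleton

/-- `S` is irredundant if it contains no redundant vertex. -/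
def Irredundant (G : SimpleGraph V) (S : Set V) : Prop := ∀ v ∈ S, ¬ Redundant G S v

end VI

namespace VI

/-- Vertices `r`, `u_1, …, u_n`, `v_1, …, v_n`, `w`, `x` of the subdivided star. -/
def PartVertex (n : ℕ) : Type :=
  Unit ⊕ Fin n ⊕ Fin n ⊕ Unit ⊕ Unit

/-- Edges `{r, u_i}`, `{u_i, v_i}`, `{r, w}` and `{w, x}`. -/
def partRel (n : ℕ) : PartVertex n → PartVertex n → Prop
  | .inl _, .inr (.inl _) => True
  | .inr (.inl i), .inr (.inr (.inl i')) => i = i'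
  | .inl _, .inr (.inr (.inr (.inl _))) => True
  | .inr (.inr (.inr (.inl _))), .inr (.inr (.inr (.inr _))) => True
  | _, _ => False

/-- The subdivided star of the reduction from Partition. -/
def partGraph (n : ℕ) : SimpleGraph (PartVertex n) := SimpleGraph.fromRel (partRel n)

/-- Weights `w(r) = B+1`, `w(u_i) = a_i`, `w(v_i) = a_i·B`, `w(w) = 1`, `w(x) = (B+1)²`. -/
def partWeight (n B : ℕ) (a : Fin n → ℕ) : PartVertex n → ℕ
  | .inl _ => B + 1
  | .inr (.inl i) => a i
  | .inr (.inr (.inl i)) => a i * B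
  | .inr (.inr (.inr (.inl _))) => 1
  | .inr (.inr (.inr (.inr _))) => (B + 1) ^ 2

end VI

namespace VI

open SimpleGraph

section Components

variable {V : Type*} (G : SimpleGraph V) (S : Set V)

/-- The vertices of the component of `G − S` containing `y`; empty when `y ∈ S`. -/
def compVerts (y : V) : Set V :=
  {p | ∃ (hp : p ∉ S) (hy : y ∉ S), (G.induce Sᶜ).Reachable ⟨p, hp⟩ ⟨y, hy⟩}

variable {G S} {y : V}

lemma image_val_supp_connectedComponentMk (hy : y ∉ S) :
    Subtype.val '' ((G.induce Sᶜ).connectedComponentMk ⟨y, hy⟩).supp = compVerts G S y := by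
  ext p
  constructor
  · rintro ⟨⟨p, hp⟩, hpy, rfl⟩
    exact ⟨hp, hy, ConnectedComponent.exact hpy⟩
  · rintro ⟨hp, _, hpy⟩
    exact ⟨⟨p, hp⟩, ConnectedComponent.sound hpy, rfl⟩

lemma mem_union_compVerts_self (y : V) : y ∈ S ∪ compVerts G S y := by
  by_cases hy : y ∈ S
  · exact Or.inl hy
  · exact Or.inr ⟨hy, hy, .refl _⟩

lemma mem_union_compVerts_of_adj {p q : V} (hq : q ∈ S ∪ compVerts G S y) (hS : q ∉ S)
    (hpq : G.Adj p q) : p ∈ S ∪ compVerts G S y := by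
  by_cases hp : p ∈ S
  · exact Or.inl hp
  · obtain ⟨_, hy, hqy⟩ := hq.resolve_left hS
    have hpq' : (G.induce Sᶜ).Adj ⟨p, hp⟩ ⟨q, hS⟩ := hpq
    exact Or.inr ⟨hp, hy, hpq'.reachable.trans hqy⟩

lemma compVerts_subset {T : Set V} (hyT : y ∈ T)
    (hT : ∀ p ∈ T, ∀ q ∉ S, G.Adj p q → q ∈ T) : compVerts G S y ⊆ T := by
  suffices ∀ {a b : ↥Sᶜ} (W : (G.induce Sᶜ).Walk a b), ↑a ∈ T → ↑b ∈ T by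
    rintro p ⟨hp, hy, ⟨W⟩⟩
    exact this W.reverse hyT
  intro a b W
  induction W with
  | nil => exact id
  | @cons a c b h _ ih => exact fun ha => ih (hT a ha c c.2 h)

end Components

section Weights

variable {V : Type*} {G : SimpleGraph V} {w : V → ℕ} {S : Set V}

variable (S) in
lemma wvi_le_viCost : wvi G w ≤ viCost G w S :=
  ciInf_le (OrderBot.bddBelow _) S

variable (G w) in
lemma exists_viCost_eq_wvi : ∃ S, viCost G w S = wvi G w :=
  Nat.sInf_mem (Set.range_nonempty _)

lemma compMax_le {m : ℕ} (h : ∀ y ∉ S, setWeight w (compVerts G S y) ≤ m) :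
    compMax G w S ≤ m := by
  refine csSup_le' ?_
  rintro _ ⟨C, rfl⟩
  induction C using ConnectedComponent.ind with
  | h y =>
    rw [image_val_supp_connectedComponentMk y.2]
    exact h y y.2

variable [Finite V]

lemma setWeight_mono {X Y : Set V} (h : X ⊆ Y) : setWeight w X ≤ setWeight w Y := by
  rw [setWeight, setWeight, finsum_mem_eq_finite_toFinset_sum _ X.toFinite,
    finsum_mem_eq_finite_toFinset_sum _ Y.toFinite]
  exact Finset.sum_le_sum_of_subset (Set.Finite.toFinset_subset_toFinset.mpr h)

lemma setWeight_compVerts_le_compMax (y : V) : setWeight w (compVerts G S y) ≤ compMax G w S := by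
  by_cases hy : y ∈ S
  · have : compVerts G S y = ∅ := Set.eq_empty_of_forall_notMem fun _ ⟨_, hy', _⟩ => hy' hy
    rw [this, setWeight, finsum_mem_empty]
    exact Nat.zero_le _
  · rw [← image_val_supp_connectedComponentMk hy]
    refine le_csSup ⟨setWeight w Set.univ, ?_⟩ ⟨_, rfl⟩
    rintro _ ⟨C, rfl⟩
    exact setWeight_mono (Set.subset_univ _)

lemma setWeight_compVerts_le_sum {y : V} {T : Finset V} (hyT : y ∈ T)
    (hT : ∀ p ∈ T, ∀ q ∉ S, G.Adj p q → q ∈ T) :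
    setWeight w (compVerts G S y) ≤ ∑ p ∈ T, w p :=
  (setWeight_mono (compVerts_subset hyT hT)).trans_eq (finsum_mem_coe_finset w T)

lemma sum_le_viCost (F : Finset V) (y : V) (hF : ∀ p ∈ F, p ∈ S ∪ compVerts G S y) :
    ∑ p ∈ F, w p ≤ viCost G w S :=
  calc ∑ p ∈ F, w p = setWeight w F := (finsum_mem_coe_finset w F).symm
    _ ≤ setWeight w (S ∪ compVerts G S y) := setWeight_mono hF
    _ = setWeight w S + setWeight w (compVerts G S y) :=
      finsum_mem_union (Set.disjoint_left.mpr fun _ hp ⟨hp', _⟩ => hp' hp)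
        (Set.toFinite _) (Set.toFinite _)
    _ ≤ viCost G w S := Nat.add_le_add_left (setWeight_compVerts_le_compMax y) _

end Weights

namespace PartVertex

variable {n : ℕ}

instance : Fintype (PartVertex n) :=
  inferInstanceAs (Fintype (Unit ⊕ Fin n ⊕ Fin n ⊕ Unit ⊕ Unit))

instance : DecidableEq (PartVertex n) :=
  inferInstanceAs (DecidableEq (Unit ⊕ Fin n ⊕ Fin n ⊕ Unit ⊕ Unit))

def r : PartVertex n := .inl ()
def u (i : Fin n) : PartVertex n := .inr (.inl i)
def v (i : Fin n) : PartVertex n := .inr (.inr (.inl i))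
def w : PartVertex n := .inr (.inr (.inr (.inl ())))
def x : PartVertex n := .inr (.inr (.inr (.inr ())))

lemma eq_r_or_u_or_v_or_w_or_x (p : PartVertex n) :
    p = r ∨ (∃ i, p = u i) ∨ (∃ i, p = v i) ∨ p = w ∨ p = x := by
  rcases p with ⟨⟩ | i | i | ⟨⟩ | ⟨⟩
  exacts [.inl rfl, .inr (.inl ⟨i, rfl⟩), .inr (.inr (.inl ⟨i, rfl⟩)),
    .inr (.inr (.inr (.inl rfl))), .inr (.inr (.inr (.inr rfl)))]

lemma u_injective : Function.Injective (u (n := n)) := fun _ _ h => by cases h; rfl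

lemma v_injective : Function.Injective (v (n := n)) := fun _ _ h => by cases h; rfl

end PartVertex

open PartVertex

section Adjacency

variable {n : ℕ} {q : PartVertex n}

lemma partGraph_adj_r : (partGraph n).Adj .r q ↔ q = .w ∨ ∃ i, q = .u i := by
  rw [partGraph, fromRel_adj]
  rcases q with _ | i | _ | _ | _
  case inr.inl => exact iff_of_true ⟨nofun, Or.inl trivial⟩ (Or.inr ⟨i, rfl⟩)
  all_goals grind [partRel, r, u, w]

lemma partGraph_adj_u {i : Fin n} : (partGraph n).Adj (.u i) q ↔ q = .r ∨ q = .v i := by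
  rw [partGraph, fromRel_adj]
  rcases q with _ | _ | _ | _ | _ <;> grind [partRel, r, u, v]

lemma partGraph_adj_v {i : Fin n} : (partGraph n).Adj (.v i) q ↔ q = .u i := by
  rw [partGraph, fromRel_adj]
  rcases q with _ | _ | _ | _ | _ <;> grind [partRel, u, v]

lemma partGraph_adj_w : (partGraph n).Adj .w q ↔ q = .r ∨ q = .x := by
  rw [partGraph, fromRel_adj]
  rcases q with _ | _ | _ | _ | _ <;> grind [partRel, r, w, x]

lemma partGraph_adj_x : (partGraph n).Adj .x q ↔ q = .w := by
  rw [partGraph, fromRel_adj]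
  rcases q with _ | _ | _ | _ | _ <;> grind [partRel, w, x]

end Adjacency

section Weight

variable {n B : ℕ} {a : Fin n → ℕ}

lemma partWeight_r : partWeight n B a .r = B + 1 := rfl
lemma partWeight_u (i : Fin n) : partWeight n B a (.u i) = a i := rfl
lemma partWeight_v (i : Fin n) : partWeight n B a (.v i) = a i * B := rfl
lemma partWeight_w : partWeight n B a .w = 1 := rfl
lemma partWeight_x : partWeight n B a .x = (B + 1) ^ 2 := rfl

lemma sum_partWeight_image_u (s : Finset (Fin n)) :
    ∑ p ∈ s.image u, partWeight n B a p = ∑ i ∈ s, a i :=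
  Finset.sum_image fun _ _ _ _ h => u_injective h

lemma sum_partWeight_image_v (s : Finset (Fin n)) :
    ∑ p ∈ s.image v, partWeight n B a p = (∑ i ∈ s, a i) * B := by
  rw [Finset.sum_image fun _ _ _ _ h => v_injective h, Finset.sum_mul]
  rfl

lemma disjoint_image_u_image_v (s t : Finset (Fin n)) : Disjoint (s.image u) (t.image v) :=
  Finset.disjoint_left.mpr (by grind [u, v])

end Weight

section Forward

variable {n B : ℕ} {a : Fin n → ℕ} {S : Set (PartVertex n)}

lemma x_notMem_of_viCost_le (hB : 0 < B) (hsum : ∑ i, a i = 2 * B)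
    (hS : viCost (partGraph n) (partWeight n B a) S ≤ (B + 1) * (B + 2)) : .x ∉ S := by
  intro hx
  by_cases hr : .r ∈ S
  · have h := (sum_le_viCost {.x, .r, .w} .w (by
      simp only [Finset.mem_insert, Finset.mem_singleton]
      rintro p (rfl | rfl | rfl)
      exacts [Or.inl hx, Or.inl hr, mem_union_compVerts_self _])).trans hS
    rw [Finset.sum_insert (by grind [x, r, w]), Finset.sum_insert (by grind [r, w]),
      Finset.sum_singleton, partWeight_x, partWeight_r, partWeight_w] at h
    nlinarith
  · have h := (sum_le_viCost (insert .x (insert .r (Finset.univ.image .u))) .r (by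
      simp only [Finset.mem_insert, Finset.mem_image]
      rintro p (rfl | rfl | ⟨i, -, rfl⟩)
      exacts [Or.inl hx, mem_union_compVerts_self _, mem_union_compVerts_of_adj
        (mem_union_compVerts_self _) hr (partGraph_adj_u.mpr (Or.inl rfl))])).trans hS
    rw [Finset.sum_insert (by grind [x, r, u]), Finset.sum_insert (by grind [r, u]),
      sum_partWeight_image_u, hsum, partWeight_x, partWeight_r] at h
    nlinarith

lemma w_mem_and_r_notMem_of_viCost_le
    (hS : viCost (partGraph n) (partWeight n B a) S ≤ (B + 1) * (B + 2)) (hx : .x ∉ S) :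
    .w ∈ S ∧ .r ∉ S := by
  by_contra hwr
  have hw : .w ∈ S ∪ compVerts (partGraph n) S .x :=
    mem_union_compVerts_of_adj (mem_union_compVerts_self _) hx (partGraph_adj_w.mpr (Or.inr rfl))
  have hr : .r ∈ S ∪ compVerts (partGraph n) S .x := by
    by_cases hwS : .w ∈ S
    · exact Or.inl (by tauto)
    · exact mem_union_compVerts_of_adj hw hwS (partGraph_adj_r.mpr (Or.inl rfl))
  have h := (sum_le_viCost {.x, .w, .r} .x (by
      simp only [Finset.mem_insert, Finset.mem_singleton]
      rintro p (rfl | rfl | rfl)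
      exacts [mem_union_compVerts_self _, hw, hr])).trans hS
  rw [Finset.sum_insert (by grind [x, r, w]), Finset.sum_insert (by grind [r, w]),
    Finset.sum_singleton, partWeight_x, partWeight_r, partWeight_w] at h
  nlinarith

open Classical in
noncomputable def cutIndices (S : Set (PartVertex n)) : Finset (Fin n) := {i | .u i ∈ S}

lemma mem_cutIndices {i : Fin n} : i ∈ cutIndices S ↔ .u i ∈ S := by
  simp [cutIndices]

lemma sum_cutIndices_le
    (hS : viCost (partGraph n) (partWeight n B a) S ≤ (B + 1) * (B + 2)) (hw : .w ∈ S) :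
    ∑ i ∈ cutIndices S, a i ≤ B := by
  have h := (sum_le_viCost (insert .x (insert .w ((cutIndices S).image .u))) .x (by
      simp only [Finset.mem_insert, Finset.mem_image]
      rintro p (rfl | rfl | ⟨i, hi, rfl⟩)
      exacts [mem_union_compVerts_self _, Or.inl hw, Or.inl (mem_cutIndices.mp hi)])).trans hS
  rw [Finset.sum_insert (by grind [x, w, u]), Finset.sum_insert (by grind [w, u]),
    sum_partWeight_image_u, partWeight_x, partWeight_w] at h
  nlinarith

lemma sum_compl_cutIndices_le (hB : 0 < B) (hsum : ∑ i, a i = 2 * B)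
    (hS : viCost (partGraph n) (partWeight n B a) S ≤ (B + 1) * (B + 2)) (hr : .r ∉ S) :
    ∑ i ∈ (cutIndices S)ᶜ, a i ≤ B := by
  have hu (i : Fin n) : .u i ∈ S ∪ compVerts (partGraph n) S .r :=
    mem_union_compVerts_of_adj (mem_union_compVerts_self _) hr (partGraph_adj_u.mpr (Or.inl rfl))
  have h := (sum_le_viCost
      (insert .r (insert .w (Finset.univ.image .u ∪ (cutIndices S)ᶜ.image .v))) .r (by
      simp only [Finset.mem_insert, Finset.mem_union, Finset.mem_image, Finset.mem_compl]
      rintro p (rfl | rfl | ⟨i, -, rfl⟩ | ⟨i, hi, rfl⟩)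
      · exact mem_union_compVerts_self _
      · exact mem_union_compVerts_of_adj (mem_union_compVerts_self _) hr
          (partGraph_adj_w.mpr (Or.inl rfl))
      · exact hu i
      · exact mem_union_compVerts_of_adj (hu i) (mt mem_cutIndices.mpr hi)
          (partGraph_adj_v.mpr rfl))).trans hS
  rw [Finset.sum_insert (by grind [r, w, u, v]), Finset.sum_insert (by grind [w, u, v]),
    Finset.sum_union (disjoint_image_u_image_v _ _), sum_partWeight_image_u,
    sum_partWeight_image_v, hsum, partWeight_r, partWeight_w] at h
  have : (∑ i ∈ (cutIndices S)ᶜ, a i) * B ≤ B * B := by nlinarith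
  exact Nat.le_of_mul_le_mul_right this hB

lemma exists_sum_eq_of_viCost_le (hB : 0 < B) (hsum : ∑ i, a i = 2 * B)
    (hS : viCost (partGraph n) (partWeight n B a) S ≤ (B + 1) * (B + 2)) :
    ∃ I : Finset (Fin n), ∑ i ∈ I, a i = B := by
  have hx := x_notMem_of_viCost_le hB hsum hS
  obtain ⟨hw, hr⟩ := w_mem_and_r_notMem_of_viCost_le hS hx
  have hcut := sum_cutIndices_le hS hw
  have hrest := sum_compl_cutIndices_le hB hsum hS hr
  have htotal := Finset.sum_add_sum_compl (cutIndices S) a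
  exact ⟨cutIndices S, by omega⟩

end Forward

section Backward

variable {n B : ℕ} {a : Fin n → ℕ} {I : Finset (Fin n)}

def partSeparator (I : Finset (Fin n)) : Finset (PartVertex n) := insert .w (I.image .u)

def rootComponent (I : Finset (Fin n)) : Finset (PartVertex n) :=
  insert .r (Iᶜ.image .u ∪ Iᶜ.image .v)

lemma w_mem_partSeparator : .w ∈ partSeparator I :=
  Finset.mem_insert_self _ _

lemma u_mem_partSeparator {i : Fin n} (hi : i ∈ I) : .u i ∈ partSeparator I :=
  Finset.mem_insert_of_mem (Finset.mem_image_of_mem _ hi)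

lemma r_mem_rootComponent : .r ∈ rootComponent I :=
  Finset.mem_insert_self _ _

lemma u_mem_rootComponent {i : Fin n} (hi : i ∉ I) : .u i ∈ rootComponent I :=
  Finset.mem_insert_of_mem (Finset.mem_union_left _
    (Finset.mem_image_of_mem _ (Finset.mem_compl.mpr hi)))

lemma v_mem_rootComponent {i : Fin n} (hi : i ∉ I) : .v i ∈ rootComponent I :=
  Finset.mem_insert_of_mem (Finset.mem_union_right _
    (Finset.mem_image_of_mem _ (Finset.mem_compl.mpr hi)))

lemma rootComponent_closed :
    ∀ p ∈ rootComponent I, ∀ q ∉ (partSeparator I : Set (PartVertex n)),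
      (partGraph n).Adj p q → q ∈ rootComponent I := by
  intro p hp q hq hpq
  simp only [rootComponent, Finset.mem_insert, Finset.mem_union, Finset.mem_image,
    Finset.mem_compl] at hp
  rcases hp with rfl | ⟨i, hi, rfl⟩ | ⟨i, hi, rfl⟩
  · rcases partGraph_adj_r.mp hpq with rfl | ⟨j, rfl⟩
    · exact absurd w_mem_partSeparator hq
    · exact u_mem_rootComponent fun hj => hq (u_mem_partSeparator hj)
  · rcases partGraph_adj_u.mp hpq with rfl | rfl
    exacts [r_mem_rootComponent, v_mem_rootComponent hi]
  · rw [partGraph_adj_v.mp hpq]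
    exact u_mem_rootComponent hi

lemma sum_partWeight_rootComponent (hsum : ∑ i, a i = 2 * B) (hI : ∑ i ∈ I, a i = B) :
    ∑ p ∈ rootComponent I, partWeight n B a p = (B + 1) ^ 2 := by
  have hIc : ∑ i ∈ Iᶜ, a i = B := by
    have := Finset.sum_add_sum_compl I a
    omega
  rw [rootComponent, Finset.sum_insert (by grind [r, u, v]),
    Finset.sum_union (disjoint_image_u_image_v _ _), sum_partWeight_image_u,
    sum_partWeight_image_v, hIc, partWeight_r]
  ring

lemma compMax_partSeparator_le (hsum : ∑ i, a i = 2 * B) (hI : ∑ i ∈ I, a i = B) :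
    compMax (partGraph n) (partWeight n B a) (partSeparator I) ≤ (B + 1) ^ 2 := by
  have hroot {y : PartVertex n} (hy : y ∈ rootComponent I) :
      setWeight (partWeight n B a) (compVerts (partGraph n) (partSeparator I) y) ≤ (B + 1) ^ 2 :=
    (setWeight_compVerts_le_sum hy rootComponent_closed).trans
      (sum_partWeight_rootComponent hsum hI).le
  refine compMax_le fun y hy => ?_
  obtain rfl | ⟨i, rfl⟩ | ⟨i, rfl⟩ | rfl | rfl := y.eq_r_or_u_or_v_or_w_or_x
  · exact hroot r_mem_rootComponent
  · exact hroot (u_mem_rootComponent fun hi => hy (u_mem_partSeparator hi))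
  · by_cases hi : i ∈ I
    · refine (setWeight_compVerts_le_sum (Finset.mem_singleton_self _) ?_).trans ?_
      · intro p hp q hq hpq
        rw [Finset.mem_singleton.mp hp, partGraph_adj_v] at hpq
        exact absurd (hpq ▸ u_mem_partSeparator hi) hq
      · have : a i ≤ B := hI ▸ Finset.single_le_sum (fun _ _ => Nat.zero_le _) hi
        rw [Finset.sum_singleton, partWeight_v]
        nlinarith
    · exact hroot (v_mem_rootComponent hi)
  · exact absurd w_mem_partSeparator hy
  · refine (setWeight_compVerts_le_sum (Finset.mem_singleton_self _) ?_).trans_eq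
      (Finset.sum_singleton _ _)
    intro p hp q hq hpq
    rw [Finset.mem_singleton.mp hp, partGraph_adj_x] at hpq
    exact absurd (hpq ▸ w_mem_partSeparator) hq

lemma viCost_partSeparator_le (hsum : ∑ i, a i = 2 * B) (hI : ∑ i ∈ I, a i = B) :
    viCost (partGraph n) (partWeight n B a) (partSeparator I) ≤ (B + 1) * (B + 2) := by
  have hsep : setWeight (partWeight n B a) (partSeparator I) = 1 + B := by
    rw [setWeight, finsum_mem_coe_finset, partSeparator, Finset.sum_insert (by grind [w, u]),
      sum_partWeight_image_u, hI, partWeight_w]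
  rw [viCost, hsep]
  nlinarith [compMax_partSeparator_le hsum hI]

end Backward

end VI

open VI SimpleGraph in
theorem statement11_general (n B k : ℕ) (a : Fin n → ℕ)
    (hsum : ∑ i, a i = 2 * B) (hk : k = (B + 1) * (B + 2)) :
    wvi (partGraph n) (partWeight n B a) ≤ k ↔
      ∃ I : Finset (Fin n), ∑ i ∈ I, a i = B := by
  subst hk
  constructor
  · intro h
    rcases Nat.eq_zero_or_pos B with rfl | hB
    · exact ⟨∅, rfl⟩
    obtain ⟨S, hS⟩ := exists_viCost_eq_wvi (partGraph n) (partWeight n B a)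
    exact exists_sum_eq_of_viCost_le hB hsum (hS.trans_le h)
  · rintro ⟨I, hI⟩
    exact (wvi_le_viCost _).trans (viCost_partSeparator_le hsum hI)

open VI SimpleGraph in
/-- `wvi(G) ≤ (B+1)(B+2)` iff the Partition instance `a_1, …, a_n` has a solution. -/
theorem statement11 (n B k : ℕ) (a : Fin n → ℕ) (ha : ∀ i, 0 < a i)
    (hsum : ∑ i, a i = 2 * B) (hle : ∀ i, a i ≤ B) (hk : k = (B + 1) * (B + 2)) :
    wvi (partGraph n) (partWeight n B a) ≤ k ↔
      ∃ I : Finset (Fin n), ∑ i ∈ I, a i = B :=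
  statement11_general n B k a hsum hk
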